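/- Let v be an aperiodic infinite binary word. If the series Φ_ℝ(v) converges, then 2^ℓ/3^{h(ℓ)} → 0 as ℓ → ∞, and consequently liminf_{ℓ→∞} h(ℓ)/ℓ ≥ log 2 / log 3. -/

import Mathlib

/-- An infinite binary word is eventually periodic if for some period `p ≥ 1`
its digits satisfy `v (n+p) = v n` from some index on. -/
def EventuallyPeriodicWord (v : ℕ → Bool) : Prop :=
  ∃ p : ℕ, 0 < p ∧ ∃ N : ℕ, ∀ n ≥ N, v (n + p) = v n

/-- The position of the `i`-th `1` (0-indexed) of the infinite binary word `v`. -/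
noncomputable def onePos (v : ℕ → Bool) (i : ℕ) : ℕ :=
  Nat.nth (fun n => v n = true) i

/-- The `m`-th partial sum of the series `Φ_ℝ(v) = −∑_{i} 2^{d_i}/3^{i+1}`,
where `d_i` enumerates the positions of the `1`s of `v`. -/
noncomputable def phiPartial (v : ℕ → Bool) (m : ℕ) : ℝ :=
  -∑ i ∈ Finset.range m, (2 : ℝ) ^ onePos v i / 3 ^ (i + 1)

/-- The number of `1`s among the first `ℓ` digits of the infinite binary word `v`. -/
def heightOfPrefix (v : ℕ → Bool) (ℓ : ℕ) : ℕ :=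
  ((Finset.range ℓ).filter fun k => v k = true).card

/-!
Write `h = h(ℓ)`. Since only `h` ones occur before position `ℓ`, the `h`-th one (0-indexed) sits at
`d_h ≥ ℓ`, so `2^ℓ / 3^h ≤ 3 · 2^{d_h} / 3^{h+1}`, which is three times the `h`-th term of the
series `Φ_ℝ(v)`. The terms of a convergent series tend to `0`, and `h(ℓ) → ∞` because an aperiodic
word has infinitely many ones. Taking logarithms of `2^ℓ ≤ 3^{h(ℓ)}` gives the liminf bound.
-/

open Filter Topology

noncomputable def phiTerm (v : ℕ → Bool) (i : ℕ) : ℝ :=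
  (2 : ℝ) ^ onePos v i / 3 ^ (i + 1)

lemma phiTerm_nonneg (v : ℕ → Bool) (i : ℕ) : 0 ≤ phiTerm v i := by
  unfold phiTerm
  positivity

lemma phiPartial_eq_neg_sum_phiTerm (v : ℕ → Bool) (m : ℕ) :
    phiPartial v m = -∑ i ∈ Finset.range m, phiTerm v i :=
  rfl

lemma tendsto_phiTerm_zero_of_tendsto_phiPartial {v : ℕ → Bool} {ζ : ℝ}
    (hζ : Tendsto (phiPartial v) atTop (𝓝 ζ)) : Tendsto (phiTerm v) atTop (𝓝 0) := by
  have hsum : HasSum (phiTerm v) (-ζ) := by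
    rw [hasSum_iff_tendsto_nat_of_nonneg (phiTerm_nonneg v)]
    simpa [phiPartial_eq_neg_sum_phiTerm] using hζ.neg
  exact hsum.summable.tendsto_atTop_zero

lemma EventuallyPeriodicWord.of_finite_ones {v : ℕ → Bool} (hfin : {n | v n = true}.Finite) :
    EventuallyPeriodicWord v := by
  obtain ⟨m, hm⟩ := hfin.bddAbove
  have hzero : ∀ n > m, v n = false := fun n hn => by
    by_contra hv
    exact absurd (hm (Bool.not_eq_false _ ▸ hv : v n = true)) (by omega)
  exact ⟨1, one_pos, m + 1, fun n hn => by rw [hzero n (by omega), hzero (n + 1) (by omega)]⟩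

lemma infinite_ones_of_not_eventuallyPeriodicWord {v : ℕ → Bool}
    (hv : ¬ EventuallyPeriodicWord v) : {n | v n = true}.Infinite :=
  fun hfin => hv (.of_finite_ones hfin)

lemma heightOfPrefix_eq_count (v : ℕ → Bool) (ℓ : ℕ) :
    heightOfPrefix v ℓ = Nat.count (fun n => v n = true) ℓ := by
  rw [Nat.count_eq_card_filter_range]
  rfl

lemma heightOfPrefix_le (v : ℕ → Bool) (ℓ : ℕ) : heightOfPrefix v ℓ ≤ ℓ :=
  heightOfPrefix_eq_count v ℓ ▸ Nat.count_le _

section InfinitelyManyOnes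

variable {v : ℕ → Bool} (hinf : {n | v n = true}.Infinite)
include hinf

lemma tendsto_heightOfPrefix_atTop : Tendsto (heightOfPrefix v) atTop atTop := by
  simp only [funext (heightOfPrefix_eq_count v)]
  refine tendsto_atTop_atTop_of_monotone (Nat.count_monotone _) fun b => ?_
  exact ⟨Nat.nth _ b, (Nat.count_nth_of_infinite hinf b).ge⟩

lemma le_onePos_heightOfPrefix (ℓ : ℕ) : ℓ ≤ onePos v (heightOfPrefix v ℓ) := by
  rw [heightOfPrefix_eq_count]
  exact Nat.le_nth_count hinf ℓ

lemma two_pow_div_three_pow_heightOfPrefix_le (ℓ : ℕ) :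
    (2 : ℝ) ^ ℓ / 3 ^ heightOfPrefix v ℓ ≤ 3 * phiTerm v (heightOfPrefix v ℓ) := by
  calc (2 : ℝ) ^ ℓ / 3 ^ heightOfPrefix v ℓ
      ≤ 2 ^ onePos v (heightOfPrefix v ℓ) / 3 ^ heightOfPrefix v ℓ := by
        gcongr
        · norm_num
        · exact le_onePos_heightOfPrefix hinf ℓ
    _ = 3 * phiTerm v (heightOfPrefix v ℓ) := by
        rw [phiTerm, pow_succ]
        field_simp

end InfinitelyManyOnes

lemma log_div_log_le_liminf_of_tendsto_pow_div_pow {a : ℕ → ℕ} {b c : ℝ} (hb : 0 < b)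
    (hc : 1 < c) (ha : ∀ ℓ, a ℓ ≤ ℓ)
    (h : Tendsto (fun ℓ => b ^ ℓ / c ^ a ℓ) atTop (𝓝 0)) :
    Real.log b / Real.log c ≤ liminf (fun ℓ : ℕ => (a ℓ : ℝ) / ℓ) atTop := by
  have hlogc : 0 < Real.log c := Real.log_pos hc
  have hev : ∀ᶠ ℓ : ℕ in atTop, Real.log b / Real.log c ≤ (a ℓ : ℝ) / ℓ := by
    filter_upwards [h.eventually_le_const one_pos, eventually_ge_atTop 1] with ℓ hℓ hℓ1
    have hℓpos : (0 : ℝ) < ℓ := by exact_mod_cast hℓ1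
    have hpow : b ^ ℓ ≤ c ^ a ℓ := (div_le_one (by positivity)).mp hℓ
    have hlog : (ℓ : ℝ) * Real.log b ≤ a ℓ * Real.log c := by
      simpa only [Real.log_pow] using Real.log_le_log (by positivity) hpow
    rw [div_le_div_iff₀ hlogc hℓpos]
    linarith
  refine le_liminf_of_le (isCoboundedUnder_ge_of_eventually_le atTop (x := 1) ?_) hev
  filter_upwards [eventually_ge_atTop 1] with ℓ hℓ1
  rw [div_le_one (by exact_mod_cast hℓ1)]
  exact_mod_cast ha ℓ

/-- If `v` is aperiodic and the series `Φ_ℝ(v)` converges, then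
`2^ℓ/3^{h(ℓ)} → 0`, and consequently `liminf h(ℓ)/ℓ ≥ log 2 / log 3`. -/
theorem stmt10 (v : ℕ → Bool) (hv : ¬ EventuallyPeriodicWord v)
    (hconv : ∃ ζ : ℝ, Tendsto (phiPartial v) atTop (nhds ζ)) :
    Tendsto (fun ℓ : ℕ => (2 : ℝ) ^ ℓ / 3 ^ heightOfPrefix v ℓ) atTop (nhds 0) ∧
    Real.log 2 / Real.log 3 ≤
      liminf (fun ℓ : ℕ => (heightOfPrefix v ℓ : ℝ) / ℓ) atTop := by
  obtain ⟨ζ, hζ⟩ := hconv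
  have hinf := infinite_ones_of_not_eventuallyPeriodicWord hv
  have hterm : Tendsto (fun ℓ => 3 * phiTerm v (heightOfPrefix v ℓ)) atTop (𝓝 0) := by
    simpa using ((tendsto_phiTerm_zero_of_tendsto_phiPartial hζ).comp
      (tendsto_heightOfPrefix_atTop hinf)).const_mul (3 : ℝ)
  have hlim : Tendsto (fun ℓ : ℕ => (2 : ℝ) ^ ℓ / 3 ^ heightOfPrefix v ℓ) atTop (𝓝 0) :=
    squeeze_zero (fun ℓ => by positivity) (two_pow_div_three_pow_heightOfPrefix_le hinf) hterm
  exact ⟨hlim, log_div_log_le_liminf_of_tendsto_pow_div_pow two_pos (by norm_num)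
    (heightOfPrefix_le v) hlim⟩
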